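/- A set of gcd conditions (Q, f) is admissible if and only if for every prime p and every T in Q, g_p(T) = min{v_i^(p) : i in T}. -/

import Mathlib

/-!
Write `v i` for the largest exponent of `p` among the prescribed values `f T` with `i ∈ T`.
If `n` realises the conditions, then `f T ∣ n i` whenever `i ∈ T`, so `v i ≤ ord_p (n i)`, and
`ord_p (f T) = min_{i ∈ T} ord_p (n i)` pins `min_{i ∈ T} v i` between `ord_p (f T)` and itself.
Conversely `n i := lcm {f T | i ∈ T}` has `ord_p (n i) = v i` for every prime `p`, so the
condition says exactly that `gcd_{i ∈ T} n i` and `f T` have the same factorization.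
-/

theorem Finset.factorization_gcd {ι : Type*} {s : Finset ι} (hs : s.Nonempty) {n : ι → ℕ}
    (hn : ∀ i ∈ s, n i ≠ 0) (p : ℕ) :
    (s.gcd n).factorization p = s.inf' hs fun i => (n i).factorization p := by
  induction hs using Finset.Nonempty.cons_induction with
  | singleton a => simp
  | cons a s ha hs ih =>
    have hgcd : s.gcd n ≠ 0 := by
      obtain ⟨b, hb⟩ := hs
      exact fun h => hn b (mem_cons_of_mem hb) (gcd_eq_zero_iff.mp h b hb)
    rw [gcd_cons, inf'_cons, gcd_eq_nat_gcd,
      Nat.factorization_gcd (hn a (mem_cons_self a s)) hgcd, Finsupp.inf_apply,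
      ih fun i hi => hn i (mem_cons_of_mem hi)]

namespace GcdConditions

open Finset

variable {α : Type*} [DecidableEq α] (Q : Finset (Finset α)) (f : Finset α → ℕ)

/-- The paper's `v_i^(p)`. -/
def maxExponent (p : ℕ) (i : α) : ℕ :=
  (Q.filter fun T => i ∈ T).sup fun T => (f T).factorization p

def lcmSolution (i : α) : ℕ :=
  (Q.filter fun T => i ∈ T).lcm f

variable {Q f}

theorem factorization_le_maxExponent {T : Finset α} (hT : T ∈ Q) {i : α} (hi : i ∈ T) (p : ℕ) :
    (f T).factorization p ≤ maxExponent Q f p i :=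
  le_sup (f := fun T => (f T).factorization p) (mem_filter.mpr ⟨hT, hi⟩)

theorem maxExponent_le_factorization {n : α → ℕ} (hn : ∀ i, n i ≠ 0)
    (hgcd : ∀ T ∈ Q, T.gcd n = f T) (p : ℕ) (i : α) :
    maxExponent Q f p i ≤ (n i).factorization p := by
  refine Finset.sup_le fun T hT => ?_
  obtain ⟨hTQ, hi⟩ := mem_filter.mp hT
  have hdvd : f T ∣ n i := hgcd T hTQ ▸ gcd_dvd hi
  exact (Nat.factorization_le_iff_dvd (ne_zero_of_dvd_ne_zero (hn i) hdvd) (hn i)).mpr hdvd p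

theorem factorization_eq_inf'_maxExponent {n : α → ℕ} (hn : ∀ i, n i ≠ 0)
    (hgcd : ∀ T ∈ Q, T.gcd n = f T) (p : ℕ) {T : Finset α} (hT : T ∈ Q) (hTne : T.Nonempty) :
    (f T).factorization p = T.inf' hTne (maxExponent Q f p) := by
  have hfT : (f T).factorization p = T.inf' hTne fun i => (n i).factorization p := by
    rw [← hgcd T hT, factorization_gcd hTne fun i _ => hn i]
  refine le_antisymm (le_inf' _ _ fun i hi => factorization_le_maxExponent hT hi p) ?_
  rw [hfT]
  exact inf'_mono_fun fun i _ => maxExponent_le_factorization hn hgcd p i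

variable (hf : ∀ T ∈ Q, f T ≠ 0)
include hf

theorem lcmSolution_ne_zero (i : α) : lcmSolution Q f i ≠ 0 := fun h => by
  obtain ⟨T, hT, hfT⟩ := lcm_eq_zero_iff.mp h
  exact hf T (mem_filter.mp hT).1 hfT

theorem factorization_lcmSolution (p : ℕ) (i : α) :
    (lcmSolution Q f i).factorization p = maxExponent Q f p i :=
  factorization_lcm (fun T hT => hf T (mem_filter.mp hT).1) p

theorem gcd_lcmSolution {T : Finset α} (hT : T ∈ Q) (hTne : T.Nonempty)
    (hexp : ∀ p : ℕ, p.Prime → (f T).factorization p = T.inf' hTne (maxExponent Q f p)) :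
    T.gcd (lcmSolution Q f) = f T := by
  refine Nat.eq_of_factorization_eq (fun h => lcmSolution_ne_zero hf _ <|
    gcd_eq_zero_iff.mp h _ hTne.choose_spec) (hf T hT) fun p => ?_
  by_cases hp : p.Prime
  · rw [factorization_gcd hTne fun i _ => lcmSolution_ne_zero hf i, hexp p hp]
    exact inf'_congr hTne rfl fun i _ => factorization_lcmSolution hf p i
  · simp [Nat.factorization_eq_zero_of_not_prime _ hp]

end GcdConditions

theorem stmt_3_general (k : ℕ)
    (Q : Finset (Finset (Fin k))) (hQ : ∀ T ∈ Q, 2 ≤ T.card)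
    (f : Finset (Fin k) → ℕ) (hf : ∀ T ∈ Q, 0 < f T) :
    (∃ n : Fin k → ℕ, (∀ i, 0 < n i) ∧ ∀ T ∈ Q, T.gcd n = f T) ↔
      (∀ p : ℕ, p.Prime → ∀ T ∈ Q, ∀ hTne : T.Nonempty,
        (f T).factorization p =
          T.inf' hTne (fun i =>
            (Q.filter (fun T' => i ∈ T')).sup (fun T' => (f T').factorization p))) := by
  have hf' : ∀ T ∈ Q, f T ≠ 0 := fun T hT => (hf T hT).ne'
  constructor
  · rintro ⟨n, hn, hgcd⟩ p - T hT hTne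
    exact GcdConditions.factorization_eq_inf'_maxExponent (fun i => (hn i).ne') hgcd p hT hTne
  · intro hexp
    refine ⟨GcdConditions.lcmSolution Q f,
      fun i => Nat.pos_of_ne_zero (GcdConditions.lcmSolution_ne_zero hf' i), fun T hT => ?_⟩
    have hTne : T.Nonempty := Finset.card_pos.mp (by linarith [hQ T hT])
    exact GcdConditions.gcd_lcmSolution hf' hT hTne fun p hp => hexp p hp T hT hTne

/-- The set of gcd conditions `(Q, f)` is admissible if and only if for
every prime `p` and every `T ∈ Q`, `g_p(T) = min {v_i^(p) : i ∈ T}`. -/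
theorem stmt_3 (k : ℕ) (hk : 2 ≤ k)
    (Q : Finset (Finset (Fin k))) (hQ : ∀ T ∈ Q, 2 ≤ T.card)
    (f : Finset (Fin k) → ℕ) (hf : ∀ T ∈ Q, 0 < f T) :
    (∃ n : Fin k → ℕ, (∀ i, 0 < n i) ∧ ∀ T ∈ Q, T.gcd n = f T) ↔
      (∀ p : ℕ, p.Prime → ∀ T ∈ Q, ∀ hTne : T.Nonempty,
        (f T).factorization p =
          T.inf' hTne (fun i =>
            (Q.filter (fun T' => i ∈ T')).sup (fun T' => (f T').factorization p))) :=
  stmt_3_general k Q hQ f hf
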